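/- Let n ≥ 3. Realize the even affine Weyl group of type C_n concretely as the set of affine transformations of ℝ^n (vectors x : Fin n → ℝ) of the form x ↦ y with y i = ε i * x (σ⁻¹ i) + t i, where σ is a permutation of Fin n, ε : Fin n → ℝ has ε i ∈ {1, -1} for all i and satisfies sign(σ) · ∏_i ε i = +1, and t : Fin n → ℤ. Then: (i) for every x : Fin n → ℝ there exists such a transformation carrying x to a point y satisfying y 0 ≤ 1/2, y 1 ≤ 1/2, y i ≥ y 2 for i ∈ {0, 1}, y j ≥ y k whenever 2 ≤ j ≤ k ≤ n-1, and y (n-1) ≥ 0; and (ii) if both x and y satisfy the strict version of these inequalities (x 0 < 1/2, x 1 < 1/2, x 0 > x 2, x 1 > x 2, x 2 > x 3 > ⋯ > x (n-1) > 0, likewise for y) and y is obtained from x by such a transformation, then y = x. -/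

import Mathlib

/-!
Every coordinate can be moved into `[0, 1/2]` by a sign change and an integer shift, and the
resulting vector sorted decreasingly by a permutation. If the signed permutation so obtained is
odd, composing with the transposition of the first two coordinates makes it even without leaving
the closed chamber, because that chamber does not order `y 0` and `y 1`.

For uniqueness, all coordinates of a point of the open chamber lie in `(0, 1/2)`, which forces
every sign to be `+1` and every shift to be `0`; then `y = x ∘ σ⁻¹`. In the open chamber the
coordinate of index `i ≥ 2` is exceeded by exactly `i` coordinates, while `x 0` and `x 1` are
exceeded by at most one, so `σ` fixes every index `≥ 2`. Being even, it is the identity.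
-/

open Finset

theorem Equiv.Perm.eq_one_of_support_subset_pair {α : Type*} [DecidableEq α] [Fintype α]
    {σ : Equiv.Perm α} {a b : α} (h : σ.support ⊆ {a, b}) (hσ : Equiv.Perm.sign σ = 1) :
    σ = 1 := by
  have hcard : #σ.support ≤ 2 := (card_le_card h).trans card_le_two
  interval_cases hc : #σ.support
  · exact Equiv.Perm.support_eq_empty_iff.mp (card_eq_zero.mp hc)
  · exact absurd hc σ.card_support_ne_one
  · have := (Equiv.Perm.card_support_eq_two.mp hc).sign_eq
    rw [hσ] at this
    exact absurd this (by decide)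

namespace CnEven

section Transform

variable {ι : Type*}

def transform (σ : Equiv.Perm ι) (ε : ι → ℝ) (t : ι → ℤ) (x : ι → ℝ) : ι → ℝ :=
  fun i => ε i * x (σ⁻¹ i) + t i

lemma transform_comp_perm (σ τ : Equiv.Perm ι) (ε : ι → ℝ) (t : ι → ℤ) (x : ι → ℝ) :
    transform σ ε t x ∘ τ = transform (τ⁻¹ * σ) (ε ∘ τ) (t ∘ τ) x := by
  ext i
  simp [transform]

variable [Fintype ι] [DecidableEq ι]

lemma sign_mul_prod_comp_perm (σ τ : Equiv.Perm ι) (ε : ι → ℝ) :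
    ((Equiv.Perm.sign (τ⁻¹ * σ) : ℤ) : ℝ) * ∏ i, (ε ∘ τ) i
      = (Equiv.Perm.sign τ : ℤ) * (((Equiv.Perm.sign σ : ℤ) : ℝ) * ∏ i, ε i) := by
  rw [Function.comp_def, Equiv.prod_comp τ ε, Equiv.Perm.sign_mul, Equiv.Perm.sign_inv]
  push_cast
  ring

lemma sign_mul_prod_eq_one_or {ε : ι → ℝ} (hε : ∀ i, ε i = 1 ∨ ε i = -1)
    (σ : Equiv.Perm ι) :
    ((Equiv.Perm.sign σ : ℤ) : ℝ) * ∏ i, ε i = 1 ∨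
      ((Equiv.Perm.sign σ : ℤ) : ℝ) * ∏ i, ε i = -1 := by
  apply mul_self_eq_one_iff.mp
  have hsign : ((Equiv.Perm.sign σ : ℤ) : ℝ) * (Equiv.Perm.sign σ : ℤ) = 1 := by
    rw [← Int.cast_mul, ← Units.val_mul, Int.units_mul_self]
    simp
  have hprod : ∏ i, ε i * ε i = 1 :=
    prod_eq_one fun i _ => by rcases hε i with h | h <;> simp [h]
  calc _ = ((Equiv.Perm.sign σ : ℤ) : ℝ) * (Equiv.Perm.sign σ : ℤ) * ∏ i, ε i * ε i := by
          rw [prod_mul_distrib]; ring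
    _ = 1 := by rw [hsign, hprod, one_mul]

end Transform

lemma exists_signed_shift_mem_Icc (a : ℝ) :
    ∃ (e : ℝ) (m : ℤ), (e = 1 ∨ e = -1) ∧ e * a + m ∈ Set.Icc (0 : ℝ) (1 / 2) := by
  obtain ⟨hlo, hhi⟩ := abs_le.mp (abs_sub_round a)
  rcases le_total 0 (a - round a) with hpos | hneg
  · exact ⟨1, -round a, Or.inl rfl, by push_cast; constructor <;> linarith⟩
  · exact ⟨-1, round a, Or.inr rfl, by constructor <;> linarith⟩

lemma signed_shift_eq_of_mem_Ioo {a b e : ℝ} {m : ℤ} (ha : a ∈ Set.Ioo (0 : ℝ) (1 / 2))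
    (hb : b ∈ Set.Ioo (0 : ℝ) (1 / 2)) (he : e = 1 ∨ e = -1) (h : b = e * a + m) :
    e = 1 ∧ m = 0 := by
  obtain ⟨ha0, ha1⟩ := ha
  obtain ⟨hb0, hb1⟩ := hb
  rcases he with rfl | rfl
  · have hlt : m < 1 := by exact_mod_cast (show (m : ℝ) < 1 by linarith)
    have hgt : -1 < m := by exact_mod_cast (show (-1 : ℝ) < m by linarith)
    exact ⟨rfl, by omega⟩
  · have hlt : m < 1 := by exact_mod_cast (show (m : ℝ) < 1 by linarith)
    have hgt : 0 < m := by exact_mod_cast (show (0 : ℝ) < m by linarith)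
    omega

variable {n : ℕ}

lemma exists_transform_antitone_mem_Icc (x : Fin n → ℝ) :
    ∃ (σ : Equiv.Perm (Fin n)) (ε : Fin n → ℝ) (t : Fin n → ℤ),
      (∀ i, ε i = 1 ∨ ε i = -1) ∧ Antitone (transform σ ε t x) ∧
      ∀ i, transform σ ε t x i ∈ Set.Icc (0 : ℝ) (1 / 2) := by
  choose ε t hε hmem using fun i => exists_signed_shift_mem_Icc (x i)
  set u := transform 1 ε t x
  set τ := Tuple.sort (-u)
  refine ⟨τ⁻¹ * 1, ε ∘ τ, t ∘ τ, fun i => hε (τ i), ?_, ?_⟩ <;> rw [← transform_comp_perm]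
  · exact fun i j hij => neg_le_neg_iff.mp (Tuple.monotone_sort (-u) hij)
  · intro i
    simpa [u, transform] using hmem (τ i)

def ClosedChamber (hn : 2 < n) (y : Fin n → ℝ) : Prop :=
  y ⟨0, by omega⟩ ≤ 1 / 2 ∧ y ⟨1, by omega⟩ ≤ 1 / 2 ∧
    y ⟨2, by omega⟩ ≤ y ⟨0, by omega⟩ ∧ y ⟨2, by omega⟩ ≤ y ⟨1, by omega⟩ ∧
    (∀ j k : Fin n, 2 ≤ (j : ℕ) → j ≤ k → y k ≤ y j) ∧ 0 ≤ y ⟨n - 1, by omega⟩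

def OpenChamber (hn : 2 < n) (x : Fin n → ℝ) : Prop :=
  x ⟨0, by omega⟩ < 1 / 2 ∧ x ⟨1, by omega⟩ < 1 / 2 ∧
    x ⟨2, by omega⟩ < x ⟨0, by omega⟩ ∧ x ⟨2, by omega⟩ < x ⟨1, by omega⟩ ∧
    (∀ j k : Fin n, 2 ≤ (j : ℕ) → j < k → x k < x j) ∧ 0 < x ⟨n - 1, by omega⟩

lemma val_apply_lt_two {τ : Equiv.Perm (Fin n)} (hτ : ∀ i : Fin n, 2 ≤ (i : ℕ) → τ i = i)
    {i : Fin n} (hi : (i : ℕ) < 2) : (τ i : ℕ) < 2 := by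
  by_contra h
  have := τ.injective (hτ (τ i) (not_lt.mp h))
  omega

lemma closedChamber_comp_perm (hn : 2 < n) {y : Fin n → ℝ} (hy : Antitone y)
    (hmem : ∀ i, y i ∈ Set.Icc (0 : ℝ) (1 / 2)) {τ : Equiv.Perm (Fin n)}
    (hτ : ∀ i : Fin n, 2 ≤ (i : ℕ) → τ i = i) : ClosedChamber hn (y ∘ τ) := by
  have h2 : y (τ ⟨2, by omega⟩) = y ⟨2, by omega⟩ := by rw [hτ _ le_rfl]
  have hle2 {i : Fin n} (hi : (i : ℕ) < 2) : y ⟨2, by omega⟩ ≤ y (τ i) :=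
    hy (Fin.le_def.mpr (val_apply_lt_two hτ hi).le)
  refine ⟨(hmem _).2, (hmem _).2, ?_, ?_, fun j k hj hjk => ?_, (hmem _).1⟩
  · simpa [h2] using hle2 (i := ⟨0, by omega⟩) (by simp)
  · simpa [h2] using hle2 (i := ⟨1, by omega⟩) (by simp)
  · simpa [hτ j hj, hτ k (hj.trans hjk)] using hy hjk

lemma exists_even_transform_mem_closedChamber (hn : 2 < n) (x : Fin n → ℝ) :
    ∃ (σ : Equiv.Perm (Fin n)) (ε : Fin n → ℝ) (t : Fin n → ℤ),
      (∀ i, ε i = 1 ∨ ε i = -1) ∧ ((Equiv.Perm.sign σ : ℤ) : ℝ) * ∏ i, ε i = 1 ∧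
      ClosedChamber hn (transform σ ε t x) := by
  obtain ⟨σ, ε, t, hε, hanti, hmem⟩ := exists_transform_antitone_mem_Icc x
  rcases sign_mul_prod_eq_one_or hε σ with heven | hodd
  · exact ⟨σ, ε, t, hε, heven, closedChamber_comp_perm hn hanti hmem (τ := 1) fun _ _ => rfl⟩
  · have h01 : (⟨0, by omega⟩ : Fin n) ≠ ⟨1, by omega⟩ := by simp
    set τ := Equiv.swap (⟨0, by omega⟩ : Fin n) ⟨1, by omega⟩
    refine ⟨τ⁻¹ * σ, ε ∘ τ, t ∘ τ, fun i => hε (τ i), ?_, ?_⟩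
    · rw [sign_mul_prod_comp_perm, hodd, Equiv.Perm.sign_swap h01]
      norm_num
    · rw [← transform_comp_perm]
      refine closedChamber_comp_perm hn hanti hmem fun i hi => Equiv.swap_apply_of_ne_of_ne ?_ ?_
      all_goals intro h; simp [h] at hi

namespace OpenChamber

variable {hn : 2 < n} {x : Fin n → ℝ}

lemma antitoneOn (hx : OpenChamber hn x) {j k : Fin n} (hj : 2 ≤ (j : ℕ)) (hjk : j ≤ k) :
    x k ≤ x j := by
  rcases hjk.eq_or_lt with rfl | hlt
  · exact le_rfl
  · exact (hx.2.2.2.2.1 j k hj hlt).le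

lemma two_lt_of_lt_two (hx : OpenChamber hn x) {i : Fin n} (hi : (i : ℕ) < 2) :
    x ⟨2, by omega⟩ < x i := by
  obtain ⟨i, hin⟩ := i
  interval_cases i
  exacts [hx.2.2.1, hx.2.2.2.1]

lemma mem_Ioo (hx : OpenChamber hn x) (i : Fin n) : x i ∈ Set.Ioo (0 : ℝ) (1 / 2) := by
  have hlast {j : Fin n} (hj : 2 ≤ (j : ℕ)) : 0 < x j :=
    hx.2.2.2.2.2.trans_le (hx.antitoneOn hj (Fin.le_def.mpr (Nat.le_sub_one_of_lt j.isLt)))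
  have hhalf : x ⟨2, by omega⟩ < 1 / 2 := hx.2.2.1.trans hx.1
  rcases lt_or_ge (i : ℕ) 2 with hi | hi
  · refine ⟨(hlast le_rfl).trans (hx.two_lt_of_lt_two hi), ?_⟩
    obtain ⟨i, hin⟩ := i
    interval_cases i
    exacts [hx.1, hx.2.1]
  · exact ⟨hlast hi, (hx.antitoneOn le_rfl (Fin.le_def.mpr hi)).trans_lt hhalf⟩

lemma lt_iff_of_two_le (hx : OpenChamber hn x) {i j : Fin n} (hi : 2 ≤ (i : ℕ)) :
    x i < x j ↔ j < i := by
  refine ⟨fun h => not_le.mp fun hij => (hx.antitoneOn hi hij).not_gt h, fun hji => ?_⟩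
  rcases lt_or_ge (j : ℕ) 2 with hj | hj
  · exact (hx.antitoneOn le_rfl (Fin.le_def.mpr hi)).trans_lt (hx.two_lt_of_lt_two hj)
  · exact hx.2.2.2.2.1 j i hj hji

lemma card_lt_of_two_le (hx : OpenChamber hn x) {i : Fin n} (hi : 2 ≤ (i : ℕ)) :
    #{j | x i < x j} = i := by
  simp_rw [hx.lt_iff_of_two_le hi]
  rw [filter_gt_eq_Iio, Fin.card_Iio]

lemma card_lt_le_one_of_lt_two (hx : OpenChamber hn x) {i : Fin n} (hi : (i : ℕ) < 2) :
    #{j | x i < x j} ≤ 1 := by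
  have hmem {j : Fin n} (hj : j ∈ ({j | x i < x j} : Finset (Fin n))) :
      (j : ℕ) < 2 ∧ (j : ℕ) ≠ i := by
    rw [mem_filter] at hj
    refine ⟨not_le.mp fun h2 => ?_, fun h => hj.2.ne (congrArg x (Fin.ext h)).symm⟩
    exact (hx.antitoneOn le_rfl (Fin.le_def.mpr h2)).not_gt (hx.two_lt_of_lt_two hi |>.trans hj.2)
  refine card_le_one.mpr fun a ha b hb => Fin.ext ?_
  have := hmem ha
  have := hmem hb
  omega

lemma perm_apply_eq_of_two_le (hx : OpenChamber hn x) {S : Equiv.Perm (Fin n)}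
    (hxS : OpenChamber hn (x ∘ S)) {i : Fin n} (hi : 2 ≤ (i : ℕ)) : S i = i := by
  have hrank : #{j | x (S i) < x j} = i := by
    rw [← hxS.card_lt_of_two_le hi]
    exact (card_equiv S (by simp)).symm
  rcases lt_or_ge (S i : ℕ) 2 with hSi | hSi
  · have := hx.card_lt_le_one_of_lt_two hSi
    omega
  · exact Fin.ext (by rw [← hrank, hx.card_lt_of_two_le hSi])

lemma perm_eq_one (hx : OpenChamber hn x) {S : Equiv.Perm (Fin n)}
    (hxS : OpenChamber hn (x ∘ S)) (hS : Equiv.Perm.sign S = 1) : S = 1 := by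
  refine Equiv.Perm.eq_one_of_support_subset_pair (a := ⟨0, by omega⟩) (b := ⟨1, by omega⟩)
    (fun i hi => ?_) hS
  rw [Equiv.Perm.mem_support] at hi
  by_contra h
  simp only [mem_insert, mem_singleton, Fin.ext_iff] at h
  exact hi (hx.perm_apply_eq_of_two_le hxS (by omega))

end OpenChamber

lemma eq_of_transform_eq_of_openChamber (hn : 2 < n) {x y : Fin n → ℝ}
    {σ : Equiv.Perm (Fin n)} {ε : Fin n → ℝ} {t : Fin n → ℤ} (hε : ∀ i, ε i = 1 ∨ ε i = -1)
    (heven : ((Equiv.Perm.sign σ : ℤ) : ℝ) * ∏ i, ε i = 1) (hy : y = transform σ ε t x)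
    (hx : OpenChamber hn x) (hyc : OpenChamber hn y) : y = x := by
  have hshift (i : Fin n) : ε i = 1 ∧ t i = 0 :=
    signed_shift_eq_of_mem_Ioo (hx.mem_Ioo _) (hyc.mem_Ioo i) (hε i) (by rw [hy]; rfl)
  have hyx : y = x ∘ ⇑σ⁻¹ := by
    funext i
    simp [hy, transform, hshift i]
  have hsign : Equiv.Perm.sign σ⁻¹ = 1 := by
    rw [prod_eq_one fun i _ => (hshift i).1, mul_one] at heven
    rw [Equiv.Perm.sign_inv]
    exact Units.val_eq_one.mp (by exact_mod_cast heven)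
  rw [hyx] at hyc ⊢
  rw [hx.perm_eq_one hyc hsign]
  rfl

end CnEven

theorem Cn_even_affine_fundamental_domain (n : ℕ) (hn : 3 ≤ n) :
    (∀ x : Fin n → ℝ, ∃ (σ : Equiv.Perm (Fin n)) (ε : Fin n → ℝ) (t : Fin n → ℤ),
      (∀ i, ε i = 1 ∨ ε i = -1) ∧
      ((Equiv.Perm.sign σ : ℤ) : ℝ) * ∏ i, ε i = 1 ∧
      (∀ y : Fin n → ℝ, (∀ i, y i = ε i * x (σ⁻¹ i) + (t i : ℝ)) →
        y ⟨0, by omega⟩ ≤ 1 / 2 ∧ y ⟨1, by omega⟩ ≤ 1 / 2 ∧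
        y ⟨2, by omega⟩ ≤ y ⟨0, by omega⟩ ∧ y ⟨2, by omega⟩ ≤ y ⟨1, by omega⟩ ∧
        (∀ j k : Fin n, 2 ≤ (j : ℕ) → j ≤ k → y k ≤ y j) ∧
        0 ≤ y ⟨n - 1, by omega⟩)) ∧
    (∀ (x y : Fin n → ℝ) (σ : Equiv.Perm (Fin n)) (ε : Fin n → ℝ) (t : Fin n → ℤ),
      (∀ i, ε i = 1 ∨ ε i = -1) →
      ((Equiv.Perm.sign σ : ℤ) : ℝ) * ∏ i, ε i = 1 →
      (∀ i, y i = ε i * x (σ⁻¹ i) + (t i : ℝ)) →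
      x ⟨0, by omega⟩ < 1 / 2 → x ⟨1, by omega⟩ < 1 / 2 →
      x ⟨2, by omega⟩ < x ⟨0, by omega⟩ → x ⟨2, by omega⟩ < x ⟨1, by omega⟩ →
      (∀ j k : Fin n, 2 ≤ (j : ℕ) → j < k → x k < x j) →
      0 < x ⟨n - 1, by omega⟩ →
      y ⟨0, by omega⟩ < 1 / 2 → y ⟨1, by omega⟩ < 1 / 2 →
      y ⟨2, by omega⟩ < y ⟨0, by omega⟩ → y ⟨2, by omega⟩ < y ⟨1, by omega⟩ →
      (∀ j k : Fin n, 2 ≤ (j : ℕ) → j < k → y k < y j) →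
      0 < y ⟨n - 1, by omega⟩ →
      y = x) := by
  refine ⟨fun x => ?_, fun x y σ ε t hε heven hy hx0 hx1 hx20 hx21 hx hxl hy0 hy1 hy20 hy21 hyk hyl
    => ?_⟩
  · obtain ⟨σ, ε, t, hε, heven, hchamber⟩ :=
      CnEven.exists_even_transform_mem_closedChamber hn x
    refine ⟨σ, ε, t, hε, heven, fun y hy => ?_⟩
    obtain rfl : y = CnEven.transform σ ε t x := funext hy
    exact hchamber
  · exact CnEven.eq_of_transform_eq_of_openChamber hn hε heven (funext hy)
      ⟨hx0, hx1, hx20, hx21, hx, hxl⟩ ⟨hy0, hy1, hy20, hy21, hyk, hyl⟩
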